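/- arXiv:2212.12888 — 5 statements merged into one kernel-verified Lean document; each statement's English description precedes it below -/
import Mathlib

section
/- Let S ≥ 2 and N ≥ 2 be integers. Then Σ_{k=1}^{N} C(N−1, k−1) · (g(S,k) + (S−1)·f(S,k)) = S^{N−1}, where C(·,·) is the binomial coefficient. (Equivalently, the total number of subfiles of any fixed file appearing across the query sets of all S databases in the PIR scheme is S^{N−1}, so the user recovers all S^{N−1} subfiles of the demanded file.) -/
/-!
Each step of the recurrence multiplies `g + (S - 1) f` by `S - 1`, since
`(S-1) f + (S-1) ((S-2) f + g) = (S-1) ((S-1) f + g)`. Hence the `k`-th summand is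
`C(N-1, k-1) (S-1)^(k-1)`, and the sum is the binomial expansion of `((S - 1) + 1)^(N-1)`.
-/

/-- Pair `(g S k, f S k)` defined by the recurrence:
`g(S,1)=1, f(S,1)=0`, and for `k ≥ 2`,
`g(S,k)=(S−1)·f(S,k−1)`, `f(S,k)=(S−2)·f(S,k−1)+g(S,k−1)`. -/
def gfAux (S : ℕ) : ℕ → ℤ × ℤ
  | 0 => (0, 0)
  | 1 => (1, 0)
  | (k+2) => (((S : ℤ) - 1) * (gfAux S (k+1)).2,
              ((S : ℤ) - 2) * (gfAux S (k+1)).2 + (gfAux S (k+1)).1)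

def g (S k : ℕ) : ℤ := (gfAux S k).1
def f (S k : ℕ) : ℤ := (gfAux S k).2

/-- `φ_s(S,k)`: `g(S,k)` if `s = 1`, else `f(S,k)`. -/
def phi (S s k : ℕ) : ℤ := if s = 1 then g S k else f S k

/-- `ψ_s(S,k) = ⌈(k(N−1)/N)·φ_s(S,k)⌉`. -/
def psi (S N s k : ℕ) : ℤ := ⌈((k : ℚ) * ((N : ℚ) - 1) / (N : ℚ)) * ((phi S s k : ℚ))⌉

/-- `q = Σ_{k=1}^{N} Σ_{s=1}^{S} C(N,k)·ψ_s(S,k)`. -/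
def qTotal (S N : ℕ) : ℤ :=
  ∑ k ∈ Finset.Icc 1 N, ∑ s ∈ Finset.Icc 1 S, (N.choose k : ℤ) * psi S N s k

open Finset

theorem g_add_sub_one_mul_f (S k : ℕ) :
    g S (k + 1) + ((S : ℤ) - 1) * f S (k + 1) = ((S : ℤ) - 1) ^ k := by
  induction k with
  | zero => simp [g, f, gfAux]
  | succ k ih =>
    have hg : g S (k + 2) = ((S : ℤ) - 1) * f S (k + 1) := rfl
    have hf : f S (k + 2) = ((S : ℤ) - 2) * f S (k + 1) + g S (k + 1) := rfl
    rw [hg, hf, pow_succ, ← ih]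
    ring

theorem sum_Icc_one_eq_sum_range {M : Type*} [AddCommMonoid M] (F : ℕ → M) (n : ℕ) :
    ∑ k ∈ Icc 1 n, F k = ∑ i ∈ range n, F (i + 1) := by
  rw [range_eq_Ico, sum_Ico_add' F, zero_add, Ico_add_one_right_eq_Icc]

theorem total_subfiles_of_fixed_file_general (S N : ℕ) (hN : 2 ≤ N) :
    ∑ k ∈ Finset.Icc 1 N,
        ((N - 1).choose (k - 1) : ℤ) * (g S k + ((S : ℤ) - 1) * f S k)
      = (S : ℤ) ^ (N - 1) := by
  obtain ⟨n, rfl⟩ : ∃ n, N = n + 1 := ⟨N - 1, by omega⟩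
  calc ∑ k ∈ Icc 1 (n + 1), ((n + 1 - 1).choose (k - 1) : ℤ) * (g S k + ((S : ℤ) - 1) * f S k)
      = ∑ i ∈ range (n + 1), ((S : ℤ) - 1) ^ i * 1 ^ (n - i) * (n.choose i : ℤ) := by
        rw [sum_Icc_one_eq_sum_range]
        refine sum_congr rfl fun i _ => ?_
        rw [g_add_sub_one_mul_f]
        simp [mul_comm]
    _ = (S : ℤ) ^ (n + 1 - 1) := by
        rw [← add_pow]
        simp

theorem total_subfiles_of_fixed_file (S N : ℕ) (hS : 2 ≤ S) (hN : 2 ≤ N) :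
    ∑ k ∈ Finset.Icc 1 N,
        ((N - 1).choose (k - 1) : ℤ) * (g S k + ((S : ℤ) - 1) * f S k)
      = (S : ℤ) ^ (N - 1) :=
  total_subfiles_of_fixed_file_general S N hN
end

section
/- Let S ≥ 2 and N ≥ 2 be integers. Then for every s ∈ {1,…,S} and every k ∈ {1,…,N}, C(N,k)·ψ_s(S,k) − (N−1)·C(N−1,k−1)·φ_s(S,k) ≤ C(N−1,k−1)·ψ_s(S,k), where C(·,·) is the binomial coefficient. (This is the correctness condition F_s^{d,d}(k) ≤ C(N−1,k−1)·ψ_s(S,k) of Function 1.) -/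
/-!
Since `0 ≤ k(N−1)/N ≤ k` and `φ ≥ 0`, the ceiling satisfies `0 ≤ ψ ≤ kφ`. Multiplying the
claim by `k` and using `k·C(N,k) = N·C(N−1,k−1)`, it becomes
`C(N−1,k−1)·(N−k)·ψ ≤ C(N−1,k−1)·(N−1)·kφ`, which follows from `N − k ≤ N − 1` and `ψ ≤ kφ`.
-/

lemma gfAux_nonneg {S : ℕ} (hS : 2 ≤ S) : ∀ k, 0 ≤ (gfAux S k).1 ∧ 0 ≤ (gfAux S k).2
  | 0 => by simp [gfAux]
  | 1 => by simp [gfAux]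
  | k + 2 => by
    obtain ⟨hg, hf⟩ := gfAux_nonneg hS (k + 1)
    have hS' : (2 : ℤ) ≤ S := mod_cast hS
    simp only [gfAux]
    constructor <;> nlinarith

lemma phi_nonneg {S : ℕ} (hS : 2 ≤ S) (s k : ℕ) : 0 ≤ phi S s k := by
  unfold phi g f
  split_ifs
  exacts [(gfAux_nonneg hS k).1, (gfAux_nonneg hS k).2]

lemma ceil_mul_mem_Icc {c : ℚ} {k y : ℤ} (hc₀ : 0 ≤ c) (hck : c ≤ k) (hy : 0 ≤ y) :
    0 ≤ ⌈c * y⌉ ∧ ⌈c * y⌉ ≤ k * y := by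
  have hy' : (0 : ℚ) ≤ y := mod_cast hy
  refine ⟨Int.ceil_nonneg (mul_nonneg hc₀ hy'), Int.ceil_le.mpr ?_⟩
  push_cast
  exact mul_le_mul_of_nonneg_right hck hy'

lemma mul_sub_one_div_mem_Icc (k : ℕ) {N : ℕ} (hN : 1 ≤ N) :
    0 ≤ (k : ℚ) * ((N : ℚ) - 1) / N ∧ (k : ℚ) * ((N : ℚ) - 1) / N ≤ k := by
  have hN' : (1 : ℚ) ≤ N := mod_cast hN
  refine ⟨by positivity [sub_nonneg.mpr hN'], ?_⟩
  rw [div_le_iff₀ (by positivity)]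
  nlinarith [(k.cast_nonneg : (0 : ℚ) ≤ k)]

lemma psi_mem_Icc {S N : ℕ} (hS : 2 ≤ S) (hN : 1 ≤ N) (s k : ℕ) :
    0 ≤ psi S N s k ∧ psi S N s k ≤ k * phi S s k :=
  have ⟨hc₀, hck⟩ := mul_sub_one_div_mem_Icc k hN
  ceil_mul_mem_Icc hc₀ (mod_cast hck) (phi_nonneg hS s k)

lemma choose_mul_sub_le {N k : ℕ} (hk : 1 ≤ k) (hkN : k ≤ N) {x y : ℤ}
    (hx : 0 ≤ x) (hxy : x ≤ k * y) :
    (N.choose k : ℤ) * x - ((N : ℤ) - 1) * ((N - 1).choose (k - 1) : ℤ) * y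
      ≤ ((N - 1).choose (k - 1) : ℤ) * x := by
  obtain ⟨j, rfl⟩ : ∃ j, k = j + 1 := ⟨k - 1, by omega⟩
  obtain ⟨m, rfl⟩ : ∃ m, N = m + 1 := ⟨N - 1, by omega⟩
  simp only [Nat.add_sub_cancel]
  have hchoose : ((m + 1 : ℕ) : ℤ) * m.choose j = ((m + 1).choose (j + 1) : ℤ) * (j + 1) :=
    mod_cast Nat.add_one_mul_choose_eq m j
  have hC : (0 : ℤ) ≤ m.choose j := by positivity
  push_cast at hchoose hxy ⊢
  refine le_of_mul_le_mul_left ?_ (by positivity : (0 : ℤ) < j + 1)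
  calc ((j : ℤ) + 1) * (((m + 1).choose (j + 1) : ℤ) * x - (m + 1 - 1) * m.choose j * y)
      = (m + 1) * m.choose j * x - m * m.choose j * ((j + 1) * y) := by
        linear_combination (-x) * hchoose
    _ ≤ (j + 1) * (m.choose j * x) := by
        linarith [mul_le_mul_of_nonneg_left hxy (mul_nonneg (by positivity : (0 : ℤ) ≤ m) hC),
          mul_nonneg (mul_nonneg hC hx) (by positivity : (0 : ℤ) ≤ j)]

theorem F_dd_le_general (S N : ℕ) (hS : 2 ≤ S)
    (s : ℕ) (k : ℕ) (hk : k ∈ Finset.Icc 1 N) :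
    (N.choose k : ℤ) * psi S N s k
        - ((N : ℤ) - 1) * ((N - 1).choose (k - 1) : ℤ) * phi S s k
      ≤ ((N - 1).choose (k - 1) : ℤ) * psi S N s k := by
  obtain ⟨hk₁, hkN⟩ := Finset.mem_Icc.mp hk
  obtain ⟨hψ₀, hψφ⟩ := psi_mem_Icc hS (hk₁.trans hkN) s k
  exact choose_mul_sub_le hk₁ hkN hψ₀ hψφ

theorem F_dd_le (S N : ℕ) (hS : 2 ≤ S) (hN : 2 ≤ N)
    (s : ℕ) (hs : s ∈ Finset.Icc 1 S) (k : ℕ) (hk : k ∈ Finset.Icc 1 N) :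
    (N.choose k : ℤ) * psi S N s k
        - ((N : ℤ) - 1) * ((N - 1).choose (k - 1) : ℤ) * phi S s k
      ≤ ((N - 1).choose (k - 1) : ℤ) * psi S N s k :=
  F_dd_le_general S N hS s k hk
end

section
/- Let S ≥ 2 and N ≥ 2 be integers. Then Σ_{s=1}^{S} Σ_{k=1}^{N} k·C(N,k)·φ_s(S,k) = N·S^{N−1}; equivalently, Σ_{k=1}^{N} k·C(N,k)·(g(S,k)+(S−1)·f(S,k)) = N·S^{N−1}. (This is the total number q'' of queries generated by Function 2 of the proposed scheme.) -/
/-!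
Each step of the recurrence multiplies `g(S,k) + (S-1)·f(S,k)` by `S - 1`, so this quantity is
`(S-1)^(k-1)`. Summing over `s` gives exactly it, and the weighted sum
`∑ k·C(N,k)·x^(k-1)` is the derivative of `(x+1)^N`, i.e. `N·(x+1)^(N-1)`, taken at `x = S - 1`.
-/

open Finset

theorem sum_Icc_mul_choose_mul_pow {R : Type*} [CommSemiring R] (n : ℕ) (x : R) :
    ∑ k ∈ Icc 1 n, (k * n.choose k : R) * x ^ (k - 1) = n * (x + 1) ^ (n - 1) := by
  cases n with
  | zero => simp
  | succ n =>
    have hshift : ∀ i ∈ range (n + 1), ((1 + i : ℕ) * (n + 1).choose (1 + i) : R) * x ^ (1 + i - 1)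
        = (n + 1 : ℕ) * (x ^ i * 1 ^ (n - i) * n.choose i) := fun i _ =>
      calc ((1 + i : ℕ) * (n + 1).choose (1 + i) : R) * x ^ (1 + i - 1)
          = (((n + 1).choose (i + 1) * (i + 1) : ℕ) : R) * x ^ i := by
            rw [Nat.add_sub_cancel_left, add_comm 1 i]; push_cast; ring
        _ = (((n + 1) * n.choose i : ℕ) : R) * x ^ i := by rw [Nat.add_one_mul_choose_eq]
        _ = _ := by push_cast; ring
    rw [← Ico_add_one_right_eq_Icc, sum_Ico_eq_sum_range, Nat.add_sub_cancel, sum_congr rfl hshift,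
      ← mul_sum, ← add_pow, Nat.add_sub_cancel]

theorem sum_Icc_phi (S k : ℕ) (hS : 1 ≤ S) :
    ∑ s ∈ Icc 1 S, phi S s k = g S k + ((S : ℤ) - 1) * f S k := by
  have hf : ∀ s ∈ Ioc 1 S, phi S s k = f S k := fun s hs =>
    if_neg (mem_Ioc.mp hs).1.ne'
  rw [← Ioc_insert_left hS, sum_insert (by simp), sum_congr rfl hf, sum_const,
    Nat.card_Ioc, nsmul_eq_mul, Nat.cast_sub hS, phi, if_pos rfl, Nat.cast_one]

theorem sum_Icc_mul_choose_mul_g_add_sub_one_mul_f (S N : ℕ) :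
    ∑ k ∈ Icc 1 N, (k : ℤ) * (N.choose k : ℤ) * (g S k + ((S : ℤ) - 1) * f S k)
      = (N : ℤ) * (S : ℤ) ^ (N - 1) := by
  have hpow : ∀ k ∈ Icc 1 N, g S k + ((S : ℤ) - 1) * f S k = ((S : ℤ) - 1) ^ (k - 1) := by
    intro k hk
    obtain ⟨j, rfl⟩ := Nat.exists_eq_add_of_le' (mem_Icc.mp hk).1
    exact g_add_sub_one_mul_f S j
  rw [sum_congr rfl fun k hk => by rw [hpow k hk], sum_Icc_mul_choose_mul_pow, sub_add_cancel]

theorem function2_query_count_general (S N : ℕ) (hS : 2 ≤ S) :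
    (∑ s ∈ Finset.Icc 1 S, ∑ k ∈ Finset.Icc 1 N,
        (k : ℤ) * (N.choose k : ℤ) * phi S s k = (N : ℤ) * (S : ℤ) ^ (N - 1)) ∧
    (∑ k ∈ Finset.Icc 1 N,
        (k : ℤ) * (N.choose k : ℤ) * (g S k + ((S : ℤ) - 1) * f S k)
      = (N : ℤ) * (S : ℤ) ^ (N - 1)) := by
  refine ⟨?_, sum_Icc_mul_choose_mul_g_add_sub_one_mul_f S N⟩
  rw [sum_comm, ← sum_Icc_mul_choose_mul_g_add_sub_one_mul_f S N]
  refine sum_congr rfl fun k _ => ?_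
  rw [← mul_sum, sum_Icc_phi S k (by omega)]

theorem function2_query_count (S N : ℕ) (hS : 2 ≤ S) (hN : 2 ≤ N) :
    (∑ s ∈ Finset.Icc 1 S, ∑ k ∈ Finset.Icc 1 N,
        (k : ℤ) * (N.choose k : ℤ) * phi S s k = (N : ℤ) * (S : ℤ) ^ (N - 1)) ∧
    (∑ k ∈ Finset.Icc 1 N,
        (k : ℤ) * (N.choose k : ℤ) * (g S k + ((S : ℤ) - 1) * f S k)
      = (N : ℤ) * (S : ℤ) ^ (N - 1)) :=
  function2_query_count_general S N hS
end

section
/- Let S = 2 and let N ≥ 2 be an integer, and let q = Σ_{k=1}^{N} Σ_{s=1}^{S} C(N,k)·ψ_s(S,k). Then q = N·2^{N−1} − 1; in particular N·S^{N−1} − q = 1 > 0. -/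
lemma gfAux_two_succ (k : ℕ) : gfAux 2 (k + 1) = (1, 0) ∨ gfAux 2 (k + 1) = (0, 1) := by
  induction k with
  | zero => left; rfl
  | succ k ih =>
    show gfAux 2 (k + 2) = _ ∨ gfAux 2 (k + 2) = _
    rcases ih with h | h <;> simp [gfAux, h]

lemma sum_psi_two (N k : ℕ) (hk : 1 ≤ k) :
    ∑ s ∈ Finset.Icc 1 2, psi 2 N s k = ⌈(k : ℚ) * ((N : ℚ) - 1) / N⌉ := by
  obtain ⟨k, rfl⟩ := Nat.exists_eq_add_of_le' hk
  rw [show Finset.Icc 1 2 = {1, 2} from rfl, Finset.sum_pair (by decide)]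
  rcases gfAux_two_succ k with h | h <;> simp [psi, phi, g, f, h]

lemma ceil_mul_sub_one_div (k N : ℕ) (hN : N ≠ 0) :
    ⌈(k : ℚ) * ((N : ℚ) - 1) / N⌉ = k - (k : ℤ) / N := by
  have hsplit : (k : ℚ) * ((N : ℚ) - 1) / N = -((k : ℤ) / (N : ℕ) : ℚ) + (k : ℤ) := by
    push_cast; field_simp; ring
  rw [hsplit, Int.ceil_add_intCast, Int.ceil_neg, Int.floor_div_natCast, Int.floor_intCast]
  ring

lemma sum_Icc_choose_mul_self (N : ℕ) :
    ∑ k ∈ Finset.Icc 1 N, (N.choose k : ℤ) * k = N * 2 ^ (N - 1) := by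
  have h := congrArg (Nat.cast (R := ℤ)) (Nat.sum_range_mul_choose N)
  push_cast at h
  rw [← h, Finset.range_eq_Ico, Finset.sum_eq_sum_Ico_succ_bot (by omega)]
  simp only [Nat.cast_zero, zero_mul, zero_add, mul_comm]
  rfl

lemma sum_Icc_choose_mul_div_self (N : ℕ) (hN : N ≠ 0) :
    ∑ k ∈ Finset.Icc 1 N, (N.choose k : ℤ) * ((k : ℤ) / N) = 1 := by
  rw [Finset.sum_eq_single_of_mem N (Finset.mem_Icc.2 ⟨by omega, le_rfl⟩)]
  · simp [Int.ediv_self (by exact_mod_cast hN : (N : ℤ) ≠ 0)]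
  · intro k hk hkN
    have hkN' : k < N := lt_of_le_of_ne (Finset.mem_Icc.1 hk).2 hkN
    rw [Int.ediv_eq_zero_of_lt (Int.natCast_nonneg k) (by exact_mod_cast hkN'), mul_zero]

lemma qTotal_two (N : ℕ) (hN : N ≠ 0) : qTotal 2 N = N * 2 ^ (N - 1) - 1 := by
  calc qTotal 2 N = ∑ k ∈ Finset.Icc 1 N, (N.choose k : ℤ) * (k - (k : ℤ) / N) := by
        refine Finset.sum_congr rfl fun k hk => ?_
        rw [← Finset.mul_sum, sum_psi_two N k (Finset.mem_Icc.1 hk).1,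
          ceil_mul_sub_one_div k N hN]
    _ = N * 2 ^ (N - 1) - 1 := by
        simp only [mul_sub, Finset.sum_sub_distrib, sum_Icc_choose_mul_self,
          sum_Icc_choose_mul_div_self N hN]

theorem q_S_eq_two (N : ℕ) (hN : 2 ≤ N) :
    qTotal 2 N = (N : ℤ) * 2 ^ (N - 1) - 1 ∧
    (N : ℤ) * 2 ^ (N - 1) - qTotal 2 N = 1 ∧
    0 < (N : ℤ) * 2 ^ (N - 1) - qTotal 2 N := by
  have hq := qTotal_two N (by omega)
  refine ⟨hq, ?_, ?_⟩ <;> rw [hq] <;> norm_num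
end

section
/- (Lemma 4.2, case N = K) Let S ≥ 2 and N = K ≥ 2 be integers, let q = Σ_{k=1}^{N} Σ_{s=1}^{S} C(N,k)·ψ_s(S,k), let M = (N·S^{N−1} − q)/(K·S^{N−1}), and let R = q/S^{N−1}. Then for every t ∈ {1,…,K}, with R_t = min( N·(1 − t/K), ((K−t)/(t+1))·Σ_{i=0}^{N−1} S^{−i} ), one has N − (K/(tN))·(N − R_t)·M > R; that is, the memory–rate point (M,R) of the proposed scheme lies strictly below the line through (0,N) and (tN/K, R_t). -/
/-! Summing over the databases, `φ_1 + ⋯ + φ_S` at level `k + 1` is `g + (S - 1) f = (S - 1) ^ k`.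
Since `ψ_s(S,k) ≤ k φ_s(S,k)`, with exactly one copy of `φ_s` saved at `k = N`, and
`∑ₖ C(N,k) k (S - 1)^(k-1) = N S^(N-1)` (the derivative of the binomial theorem), we get
`q ≤ N S^(N-1) - (S - 1)^(N-1) < N S^(N-1)`. For `K = N` the gap between the line and `R` is
`(N S^(N-1) - q) (N (t - 1) + R_t) / (t N S^(N-1))`, and `N (t - 1) + R_t > 0` because `R_t > 0`
for `t < N`, while `t = N ≥ 2` otherwise. -/

@[simp] lemma g_zero (S : ℕ) : g S 0 = 0 := rfl
@[simp] lemma f_zero (S : ℕ) : f S 0 = 0 := rfl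
@[simp] lemma g_one (S : ℕ) : g S 1 = 1 := rfl
@[simp] lemma f_one (S : ℕ) : f S 1 = 0 := rfl
lemma g_add_two (S k : ℕ) : g S (k + 2) = ((S : ℤ) - 1) * f S (k + 1) := rfl
lemma f_add_two (S k : ℕ) : f S (k + 2) = ((S : ℤ) - 2) * f S (k + 1) + g S (k + 1) := rfl

lemma g_nonneg_and_f_nonneg {S : ℕ} (hS : 2 ≤ S) : ∀ k, 0 ≤ g S k ∧ 0 ≤ f S k
  | 0 => by simp
  | 1 => by simp
  | k + 2 => by
    obtain ⟨hg, hf⟩ := g_nonneg_and_f_nonneg hS (k + 1)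
    have hS' : (2 : ℤ) ≤ S := by exact_mod_cast hS
    rw [g_add_two, f_add_two]
    constructor <;> nlinarith

lemma g_add_mul_f_eq_pow (S : ℕ) : ∀ k, g S (k + 1) + ((S : ℤ) - 1) * f S (k + 1) = ((S : ℤ) - 1) ^ k
  | 0 => by simp
  | k + 1 => by
    rw [g_add_two, f_add_two, pow_succ, ← g_add_mul_f_eq_pow S k]
    ring

lemma sum_phi_eq_pow {S : ℕ} (hS : 1 ≤ S) (k : ℕ) :
    ∑ s ∈ Finset.Icc 1 S, phi S s (k + 1) = ((S : ℤ) - 1) ^ k := by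
  have hf : ∀ s ∈ Finset.Ioc 1 S, phi S s (k + 1) = f S (k + 1) := fun s hs =>
    if_neg (Finset.mem_Ioc.1 hs).1.ne'
  rw [Finset.Icc_eq_cons_Ioc hS, Finset.sum_cons, Finset.sum_congr rfl hf, Finset.sum_const,
    Nat.card_Ioc, nsmul_eq_mul, Nat.cast_sub hS, phi, if_pos rfl, Nat.cast_one,
    g_add_mul_f_eq_pow]

lemma psi_le_mul_phi {S : ℕ} (hS : 2 ≤ S) (N s k : ℕ) : psi S N s k ≤ k * phi S s k := by
  rw [psi, Int.ceil_le]
  push_cast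
  gcongr
  · exact_mod_cast phi_nonneg hS s k
  · exact div_le_of_le_mul₀ (by positivity) (by positivity) (by gcongr; linarith)

lemma psi_self (S s : ℕ) {N : ℕ} (hN : N ≠ 0) : psi S N s N = ((N : ℤ) - 1) * phi S s N := by
  rw [psi, mul_div_cancel_left₀ _ (Nat.cast_ne_zero.2 hN)]
  exact_mod_cast Int.ceil_intCast (((N : ℤ) - 1) * phi S s N)

lemma sum_Icc_choose_mul_mul_pow {R : Type*} [CommSemiring R] (x : R) (n : ℕ) :
    ∑ k ∈ Finset.Icc 1 n, (n.choose k : R) * k * x ^ (k - 1) = n * (x + 1) ^ (n - 1) := by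
  rcases n with _ | m
  · simp
  rw [← Finset.Ico_add_one_right_eq_Icc, ← zero_add 1, ← Finset.sum_Ico_add', ← Finset.range_eq_Ico]
  simp only [zero_add, add_tsub_cancel_right, add_pow, one_pow, mul_one, Finset.mul_sum]
  refine Finset.sum_congr rfl fun k _ => ?_
  rw [← Nat.cast_mul, ← Nat.add_one_mul_choose_eq, Nat.cast_mul]
  ring

lemma sum_psi_le {S : ℕ} (hS : 2 ≤ S) (N k : ℕ) :
    ∑ s ∈ Finset.Icc 1 S, psi S N s (k + 1) ≤ (k + 1 : ℤ) * ((S : ℤ) - 1) ^ k := by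
  calc ∑ s ∈ Finset.Icc 1 S, psi S N s (k + 1)
      ≤ ∑ s ∈ Finset.Icc 1 S, ((k + 1 : ℕ) : ℤ) * phi S s (k + 1) :=
        Finset.sum_le_sum fun s _ => psi_le_mul_phi hS N s (k + 1)
    _ = (k + 1 : ℤ) * ((S : ℤ) - 1) ^ k := by
        rw [← Finset.mul_sum, sum_phi_eq_pow (by omega)]
        push_cast
        rfl

lemma sum_psi_self {S : ℕ} (hS : 1 ≤ S) (n : ℕ) :
    ∑ s ∈ Finset.Icc 1 S, psi S (n + 1) s (n + 1) = (n : ℤ) * ((S : ℤ) - 1) ^ n := by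
  simp only [psi_self S _ n.succ_ne_zero, ← Finset.mul_sum, sum_phi_eq_pow hS]
  push_cast
  ring

lemma qTotal_le {S N : ℕ} (hS : 2 ≤ S) (hN : 1 ≤ N) :
    qTotal S N ≤ (N : ℤ) * (S : ℤ) ^ (N - 1) - ((S : ℤ) - 1) ^ (N - 1) := by
  obtain ⟨n, rfl⟩ := Nat.exists_eq_add_of_le' hN
  have hbound : ∀ k ∈ Finset.Icc 1 n,
      ∑ s ∈ Finset.Icc 1 S, ((n + 1).choose k : ℤ) * psi S (n + 1) s k
        ≤ ((n + 1).choose k : ℤ) * k * ((S : ℤ) - 1) ^ (k - 1) := by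
    intro k hk
    obtain ⟨j, rfl⟩ := Nat.exists_eq_add_of_le' (Finset.mem_Icc.1 hk).1
    rw [← Finset.mul_sum, mul_assoc, add_tsub_cancel_right]
    push_cast
    exact mul_le_mul_of_nonneg_left (sum_psi_le hS _ j) (by positivity)
  have hbinom := sum_Icc_choose_mul_mul_pow ((S : ℤ) - 1) (n + 1)
  rw [Finset.sum_Icc_succ_top (by omega), sub_add_cancel] at hbinom
  rw [qTotal, Finset.sum_Icc_succ_top (by omega), ← Finset.mul_sum, sum_psi_self (by omega)]
  have hrest := Finset.sum_le_sum hbound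
  simp only [Nat.choose_self, Nat.cast_one, one_mul, add_tsub_cancel_right] at hbinom ⊢
  push_cast at hbinom ⊢
  linarith

lemma qTotal_lt {S N : ℕ} (hS : 2 ≤ S) (hN : 1 ≤ N) :
    qTotal S N < (N : ℤ) * (S : ℤ) ^ (N - 1) := by
  have : (0 : ℤ) < ((S : ℤ) - 1) ^ (N - 1) := pow_pos (by omega) _
  linarith [qTotal_le hS hN]

lemma rate_lt_line_at_memory {F : Type*} [Field F] [LinearOrder F] [IsStrictOrderedRing F]
    {N t P q Rt : F} (hN : 0 < N) (ht : 0 < t) (hP : 0 < P) (hq : q < N * P)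
    (hline : 0 < N * (t - 1) + Rt) :
    q / P < N - N / (t * N) * (N - Rt) * ((N * P - q) / (N * P)) := by
  have key : N - N / (t * N) * (N - Rt) * ((N * P - q) / (N * P)) - q / P
      = (N * P - q) * (N * (t - 1) + Rt) / (t * N * P) := by
    field_simp
    ring
  have : 0 < (N * P - q) * (N * (t - 1) + Rt) / (t * N * P) :=
    div_pos (mul_pos (sub_pos.2 hq) hline) (by positivity)
  linarith

theorem lemma4_2_N_eq_K (S N K : ℕ) (hS : 2 ≤ S) (hN : 2 ≤ N) (hNK : N = K)
    (t : ℕ) (ht : t ∈ Finset.Icc 1 K) :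
    let q : ℚ := (qTotal S N : ℚ)
    let M : ℚ := ((N : ℚ) * (S : ℚ) ^ (N - 1) - q) / ((K : ℚ) * (S : ℚ) ^ (N - 1))
    let R : ℚ := q / (S : ℚ) ^ (N - 1)
    let Rt : ℚ := min ((N : ℚ) * (1 - (t : ℚ) / (K : ℚ)))
      ((((K : ℚ) - (t : ℚ)) / ((t : ℚ) + 1)) * ∑ i ∈ Finset.range N, ((S : ℚ) ^ i)⁻¹)
    (N : ℚ) - ((K : ℚ) / ((t : ℚ) * (N : ℚ))) * ((N : ℚ) - Rt) * M > R := by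
  subst hNK
  intro q M R Rt
  obtain ⟨ht1, htN⟩ := Finset.mem_Icc.1 ht
  have hN' : (2 : ℚ) ≤ N := by exact_mod_cast hN
  have ht' : (1 : ℚ) ≤ t := by exact_mod_cast ht1
  have hq : q < N * (S : ℚ) ^ (N - 1) := by
    simp only [q]; exact_mod_cast qTotal_lt hS (by omega)
  have hline : 0 < (N : ℚ) * (t - 1) + Rt := by
    rcases htN.lt_or_eq with hlt | rfl
    · have htN' : (t : ℚ) < N := by exact_mod_cast hlt
      have hsum : 0 < ∑ i ∈ Finset.range N, ((S : ℚ) ^ i)⁻¹ :=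
        Finset.sum_pos (fun i _ => by positivity) (Finset.nonempty_range_iff.2 (by omega))
      have hRt : 0 < Rt := lt_min
        (mul_pos (by linarith) (sub_pos.2 ((div_lt_one (by linarith)).2 htN')))
        (mul_pos (div_pos (sub_pos.2 htN') (by linarith)) hsum)
      nlinarith
    · have hRt : Rt = 0 := by simp [Rt, div_self (show (t : ℚ) ≠ 0 by linarith)]
      nlinarith
  exact rate_lt_line_at_memory (by linarith) (by linarith) (by positivity) hq hline
end
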